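/- For any complex-valued function f on F_p (p odd prime) with χ the Legendre symbol, ‖f‖₂² = |Σ_x f(x)|²/p + (1/p)·Σ_x |(f∘χ)(x)|², where (f∘χ)(x) = Σ_y f(y)χ(y+x). In particular ‖f‖₂² ≥ |Σ_x f(x)|²/p. -/

import Mathlib

open Finset

section aux

variable (p : ℕ) [Fact p.Prime]

private lemma char_ne_two (hp : p ≠ 2) : ringChar (ZMod p) ≠ 2 := by
  rw [ZMod.ringChar_zmod_n]; exact hp

private lemma aux_sum_shift (hp : p ≠ 2) {c : ZMod p} (hc : c ≠ 0) :
    ∑ x : ZMod p, quadraticChar (ZMod p) (x * (x + c)) = -1 := by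
  classical
  have h0 : ∑ x : ZMod p, quadraticChar (ZMod p) (x * (x + c))
      = ∑ x ∈ (univ : Finset (ZMod p)).erase 0, quadraticChar (ZMod p) (x * (x + c)) := by
    rw [Finset.sum_erase _ (by simp)]
  rw [h0]
  have h1 : ∀ x ∈ (univ : Finset (ZMod p)).erase 0,
      quadraticChar (ZMod p) (x * (x + c)) = quadraticChar (ZMod p) (1 + c * x⁻¹) := by
    intro x hx
    have hx0 : x ≠ 0 := Finset.ne_of_mem_erase hx
    have : x * (x + c) = x ^ 2 * (1 + c * x⁻¹) := by
      field_simp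
    rw [this, map_mul, quadraticChar_sq_one' hx0, one_mul]
  rw [Finset.sum_congr rfl h1]
  have h2 : ∑ x ∈ (univ : Finset (ZMod p)).erase 0, quadraticChar (ZMod p) (1 + c * x⁻¹)
      = ∑ v ∈ (univ : Finset (ZMod p)).erase 1, quadraticChar (ZMod p) v := by
    refine Finset.sum_nbij' (fun x => 1 + c * x⁻¹) (fun v => c * (v - 1)⁻¹) ?_ ?_ ?_ ?_ ?_
    · intro x hx
      have hx0 : x ≠ 0 := Finset.ne_of_mem_erase hx
      simp only [Finset.mem_erase, Finset.mem_univ, and_true]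
      intro h
      have : c * x⁻¹ = 0 := by linear_combination h
      rcases mul_eq_zero.mp this with h' | h'
      · exact hc h'
      · exact hx0 (inv_eq_zero.mp h')
    · intro v hv
      have hv1 : v ≠ 1 := Finset.ne_of_mem_erase hv
      simp only [Finset.mem_erase, Finset.mem_univ, and_true]
      exact mul_ne_zero hc (inv_ne_zero (sub_ne_zero.mpr hv1))
    · intro x hx
      have hx0 : x ≠ 0 := Finset.ne_of_mem_erase hx
      field_simp
      rw [add_sub_cancel_left]; exact div_self hc
    · intro v hv
      have hv1 : v ≠ 1 := Finset.ne_of_mem_erase hv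
      have : v - 1 ≠ 0 := sub_ne_zero.mpr hv1
      field_simp
      ring
    · intro x hx; rfl
  rw [h2, Finset.sum_erase_eq_sub (Finset.mem_univ 1), quadraticChar_sum_zero (char_ne_two p hp),
    map_one]
  ring

private lemma aux_sum_sq :
    ∑ x : ZMod p, quadraticChar (ZMod p) (x * x) = (p : ℤ) - 1 := by
  classical
  have h0 : ∑ x : ZMod p, quadraticChar (ZMod p) (x * x)
      = ∑ x ∈ (univ : Finset (ZMod p)).erase 0, quadraticChar (ZMod p) (x * x) := by
    rw [Finset.sum_erase _ (by simp)]
  rw [h0, Finset.sum_congr rfl (fun x hx => ?_), Finset.sum_const, nsmul_eq_mul, mul_one]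
  · rw [Finset.card_erase_of_mem (Finset.mem_univ 0), Finset.card_univ, ZMod.card]
    have : 1 ≤ p := (Fact.out : p.Prime).one_lt.le
    push_cast [Nat.cast_sub this]
    ring
  · have hx0 : x ≠ 0 := Finset.ne_of_mem_erase hx
    rw [← sq]; exact quadraticChar_sq_one' hx0

private lemma key_int (hp : p ≠ 2) (y z : ZMod p) :
    ∑ x : ZMod p, quadraticChar (ZMod p) (y + x) * quadraticChar (ZMod p) (z + x)
      = if y = z then (p : ℤ) - 1 else -1 := by
  classical
  have hshift : ∑ x : ZMod p, quadraticChar (ZMod p) (y + x) * quadraticChar (ZMod p) (z + x)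
      = ∑ u : ZMod p, quadraticChar (ZMod p) (u * (u + (z - y))) := by
    refine Fintype.sum_equiv (Equiv.addRight y) _ _ (fun x => ?_)
    simp only [Equiv.coe_addRight]
    rw [← map_mul]
    congr 1
    ring
  rw [hshift]
  by_cases h : y = z
  · subst h
    simp only [sub_self, add_zero, if_true]
    exact aux_sum_sq p
  · rw [if_neg h]
    exact aux_sum_shift p hp (sub_ne_zero.mpr (fun hh => h hh.symm))

private lemma key_complex (hp : p ≠ 2) (y z : ZMod p) :
    ∑ x : ZMod p, ((quadraticChar (ZMod p) (y + x) : ℤ) : ℂ)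
        * ((quadraticChar (ZMod p) (z + x) : ℤ) : ℂ)
      = if y = z then (p : ℂ) - 1 else -1 := by
  have h := key_int p hp y z
  by_cases hyz : y = z
  · rw [if_pos hyz] at h ⊢
    exact_mod_cast h
  · rw [if_neg hyz] at h ⊢
    exact_mod_cast h

end aux

/-- Cauchy–Schwartz in F_p: ‖f‖₂² = |⟨f⟩|²/p + (1/p)Σ|(f∘χ)(x)|², hence ‖f‖₂² ≥ |⟨f⟩|²/p. -/
theorem char_parseval (p : ℕ) [Fact p.Prime] (hp : p ≠ 2) (f : ZMod p → ℂ) :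
    (∑ x : ZMod p, ‖f x‖ ^ 2
        = ‖∑ x : ZMod p, f x‖ ^ 2 / p
          + (1 / p) * ∑ x : ZMod p,
              ‖∑ y : ZMod p, f y * ((quadraticChar (ZMod p) (y + x) : ℤ) : ℂ)‖ ^ 2)
    ∧ ∑ x : ZMod p, ‖f x‖ ^ 2 ≥ ‖∑ x : ZMod p, f x‖ ^ 2 / p := by
  classical
  set χ : ZMod p → ℂ := fun a => ((quadraticChar (ZMod p) a : ℤ) : ℂ) with hχ
  set g : ZMod p → ℂ := fun x => ∑ y : ZMod p, f y * χ (y + x) with hg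
  have hp0 : (p : ℝ) ≠ 0 := Nat.cast_ne_zero.mpr (Fact.out : p.Prime).pos.ne'
  have hconj : ∀ x, (starRingEnd ℂ) (g x) = ∑ z : ZMod p, (starRingEnd ℂ) (f z) * χ (z + x) := by
    intro x
    rw [hg, map_sum]
    refine Finset.sum_congr rfl (fun z _ => ?_)
    rw [map_mul, hχ]
    simp
  have hmain : ∑ x : ZMod p, g x * (starRingEnd ℂ) (g x)
      = (p : ℂ) * ∑ x : ZMod p, f x * (starRingEnd ℂ) (f x)
        - (∑ x : ZMod p, f x) * (starRingEnd ℂ) (∑ x : ZMod p, f x) := by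
    have step1 : ∀ x : ZMod p, g x * (starRingEnd ℂ) (g x)
        = ∑ y : ZMod p, ∑ z : ZMod p,
            f y * (starRingEnd ℂ) (f z) * (χ (y + x) * χ (z + x)) := by
      intro x
      rw [hconj x, hg]
      rw [Finset.sum_mul_sum]
      refine Finset.sum_congr rfl (fun y _ => Finset.sum_congr rfl (fun z _ => ?_))
      ring
    calc ∑ x : ZMod p, g x * (starRingEnd ℂ) (g x)
        = ∑ x : ZMod p, ∑ y : ZMod p, ∑ z : ZMod p,
            f y * (starRingEnd ℂ) (f z) * (χ (y + x) * χ (z + x)) :=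
          Finset.sum_congr rfl (fun x _ => step1 x)
      _ = ∑ y : ZMod p, ∑ z : ZMod p,
            f y * (starRingEnd ℂ) (f z) * ∑ x : ZMod p, χ (y + x) * χ (z + x) := by
          rw [Finset.sum_comm]
          refine Finset.sum_congr rfl (fun y _ => ?_)
          rw [Finset.sum_comm]
          refine Finset.sum_congr rfl (fun z _ => ?_)
          rw [Finset.mul_sum]
      _ = ∑ y : ZMod p, ∑ z : ZMod p,
            f y * (starRingEnd ℂ) (f z) * (if y = z then (p : ℂ) - 1 else -1) := by
          refine Finset.sum_congr rfl (fun y _ => Finset.sum_congr rfl (fun z _ => ?_))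
          exact congrArg (f y * (starRingEnd ℂ) (f z) * ·) (key_complex p hp y z)
      _ = ∑ y : ZMod p, ∑ z : ZMod p,
            (f y * (starRingEnd ℂ) (f z) * (if y = z then (p : ℂ) else 0)
              - f y * (starRingEnd ℂ) (f z)) := by
          refine Finset.sum_congr rfl (fun y _ => Finset.sum_congr rfl (fun z _ => ?_))
          by_cases h : y = z <;> simp [h] <;> ring
      _ = (p : ℂ) * ∑ x : ZMod p, f x * (starRingEnd ℂ) (f x)
            - (∑ x : ZMod p, f x) * (starRingEnd ℂ) (∑ x : ZMod p, f x) := by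
          rw [Finset.sum_congr rfl (fun y _ => Finset.sum_sub_distrib _ _)]
          rw [Finset.sum_sub_distrib]
          congr 1
          · rw [Finset.mul_sum]
            refine Finset.sum_congr rfl (fun y _ => ?_)
            simp only [mul_ite, mul_zero, Finset.sum_ite_eq, Finset.mem_univ, if_true]
            ring
          · rw [Finset.sum_mul, map_sum]
            refine Finset.sum_congr rfl (fun y _ => ?_)
            rw [Finset.mul_sum]
  -- now convert to the real statement
  have habs : ∀ z : ℂ, (‖z‖ ^ 2 : ℝ) = Complex.normSq z := fun z => Complex.sq_norm z
  have hpart1 : ∑ x : ZMod p, ‖f x‖ ^ 2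
      = ‖∑ x : ZMod p, f x‖ ^ 2 / p
        + (1 / p) * ∑ x : ZMod p, ‖g x‖ ^ 2 := by
    apply Complex.ofReal_injective
    push_cast [habs]
    simp only [Complex.normSq_eq_norm_sq]
    push_cast [habs]
    simp only [← Complex.mul_conj]
    rw [hmain]
    have hpC : (p : ℂ) ≠ 0 := by exact_mod_cast hp0
    field_simp
    ring
  constructor
  · exact hpart1
  · rw [hpart1]
    have : 0 ≤ (1 / (p : ℝ)) * ∑ x : ZMod p, ‖g x‖ ^ 2 := by
      apply mul_nonneg (by positivity)
      exact Finset.sum_nonneg fun x _ => by positivity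
    linarith
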